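/- arXiv:1502.03607 — 3 statements merged into one kernel-verified Lean document; each statement's English description precedes it below -/
import Mathlib

section
/- Let (A, (·,·), R) be an extended affine root supersystem over a field F of characteristic zero. If α is a nonzero real root (α ∈ R_re, α ≠ 0) and δ ∈ R_ns satisfies (δ, α) ≠ 0, then there is a unique r ∈ {1, −1} with δ + rα ∈ R; that is, exactly one of δ + α and δ − α lies in R. -/
open Pointwise

/-- A symmetric biadditive form with values in `F`. -/
structure IsSymForm {F : Type*} [Field F] {A : Type*} [AddCommGroup A]
    (form : A → A → F) : Prop where
  symm : ∀ a b, form a b = form b a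
  add_left : ∀ a b c, form (a + b) c = form a c + form b c

/-- The radical `A⁰` of a form. -/
def formRadical {F : Type*} [Field F] {A : Type*} [AddCommGroup A]
    (form : A → A → F) : Set A := {a | ∀ b, form a b = 0}

/-- The set of real roots `R_re = {α ∈ R | (α,α) ≠ 0} ∪ {0}`. -/
def reRoots {F : Type*} [Field F] {A : Type*} [AddCommGroup A]
    (form : A → A → F) (R : Set A) : Set A :=
  {α | α ∈ R ∧ form α α ≠ 0} ∪ {0}

/-- The set of nonsingular roots `R_ns = {α ∈ R \ A⁰ | (α,α) = 0} ∪ {0}`. -/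
def nsRoots {F : Type*} [Field F] {A : Type*} [AddCommGroup A]
    (form : A → A → F) (R : Set A) : Set A :=
  {α | α ∈ R ∧ form α α = 0 ∧ α ∉ formRadical form} ∪ {0}

/-- Extended affine root supersystem. -/
structure IsEARS {F : Type*} [Field F] [CharZero F] {A : Type*} [AddCommGroup A]
    (form : A → A → F) (R : Set A) extends IsSymForm form : Prop where
  zero_mem : (0 : A) ∈ R
  closure_eq_top : AddSubgroup.closure R = ⊤
  neg_mem : ∀ α ∈ R, -α ∈ R
  cartan : ∀ α ∈ R, form α α ≠ 0 → ∀ β ∈ R, ∃ k : ℤ, 2 * form α β = (k : F) * form α α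
  string : ∀ α ∈ R, form α α ≠ 0 → ∀ β ∈ R, ∃ p q : ℕ,
      2 * form β α = ((p : F) - (q : F)) * form α α ∧
      (∀ k : ℤ, β + k • α ∈ R ↔ -(p : ℤ) ≤ k ∧ k ≤ (q : ℤ))
  ns_string : ∀ α ∈ R, form α α = 0 → ∀ β ∈ R, form α β ≠ 0 →
      (β - α ∈ R ∨ β + α ∈ R)

/-- Locally finite root supersystem: an EARS with nondegenerate form. -/
def IsLFRSS {F : Type*} [Field F] [CharZero F] {A : Type*} [AddCommGroup A]
    (form : A → A → F) (R : Set A) : Prop :=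
  IsEARS form R ∧ ∀ a : A, (∀ b, form a b = 0) → a = 0

/-- `α` and `β` are connected in `X` by a finite chain with consecutive
elements non-orthogonal. -/
def ConnectedIn {F : Type*} [Field F] {A : Type*} [AddCommGroup A]
    (form : A → A → F) (X : Set A) (α β : A) : Prop :=
  ∃ (n : ℕ) (c : Fin (n + 1) → A), (∀ i, c i ∈ X) ∧ c 0 = α ∧ c (Fin.last n) = β ∧
    ∀ i : Fin n, form (c i.castSucc) (c i.succ) ≠ 0

/-- A connected subset. -/
def IsConnectedSet {F : Type*} [Field F] {A : Type*} [AddCommGroup A]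
    (form : A → A → F) (X : Set A) : Prop :=
  ∀ α ∈ X, ∀ β ∈ X, ConnectedIn form X α β

/-- Irreducibility: `R_re ≠ {0}` and `R \ R⁰` is connected. -/
def IsIrreducibleRSS {F : Type*} [Field F] {A : Type*} [AddCommGroup A]
    (form : A → A → F) (R : Set A) : Prop :=
  reRoots form R ≠ {0} ∧ IsConnectedSet form (R \ formRadical form)

/-- Sub-supersystem of a locally finite root supersystem. -/
def IsSubSupersystem {F : Type*} [Field F] {A : Type*} [AddCommGroup A]
    (form : A → A → F) (R S : Set A) : Prop :=
  S ⊆ R ∧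
  (∀ a ∈ AddSubgroup.closure S, (∀ b ∈ AddSubgroup.closure S, form a b = 0) → a = 0) ∧
  (0 : A) ∈ S ∧
  (∀ α ∈ S, form α α ≠ 0 → ∀ β ∈ S, ∀ k : ℤ,
      2 * form β α = (k : F) * form α α → β - k • α ∈ S) ∧
  (∀ γ ∈ S, form γ γ = 0 → ∀ β ∈ S, form β γ ≠ 0 → (γ - β ∈ S ∨ γ + β ∈ S))

/-- `Π` is an integral base of `R` (a `ℤ`-basis of the group generated by `R`). -/
def IsIntegralBase {F : Type*} [Field F] {A : Type*} [AddCommGroup A]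
    (form : A → A → F) (R P : Set A) : Prop :=
  P ⊆ R ∧ LinearIndependent ℤ (fun p : P => (p : A)) ∧
    Submodule.span ℤ P = Submodule.span ℤ R

/-- `Π` is a base of `R`. -/
def IsBase {F : Type*} [Field F] {A : Type*} [AddCommGroup A]
    (form : A → A → F) (R P : Set A) : Prop :=
  IsIntegralBase form R P ∧
  ∀ α ∈ R \ formRadical form, ∃ (n : ℕ) (a : Fin n → A) (r : Fin n → ℤ),
    (∀ i, a i ∈ P) ∧ (∀ i, r i = 1 ∨ r i = -1) ∧
    α = ∑ i, r i • a i ∧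
    ∀ t : Fin n, (∑ i ∈ Finset.Iic t, r i • a i) ∈ R \ formRadical form

/-!
The `α`-string through `δ` is `δ - pα, …, δ + qα` with `p - q = 2(δ,α)/(α,α) ≠ 0`, so it suffices
to show `p = 0` or `q = 0`. If both were positive, the end roots `δ + qα` and `δ - pα` would be
real, both of square length `pq(α,α)` because `δ` is isotropic, and their Cartan integers on `δ`,
namely `(p - q)/p` and `(q - p)/q`, would give `p ∣ q` and `q ∣ p`, hence `p = q`.
-/

namespace IsSymForm

variable {F : Type*} [Field F] {A : Type*} [AddCommGroup A] {form : A → A → F}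

theorem add_right (hs : IsSymForm form) (a b c : A) : form a (b + c) = form a b + form a c := by
  rw [hs.symm, hs.add_left, hs.symm b, hs.symm c]

theorem zsmul_left (hs : IsSymForm form) (n : ℤ) (a b : A) : form (n • a) b = n * form a b := by
  simpa [zsmul_eq_mul] using map_zsmul (AddMonoidHom.mk' (form · b) (hs.add_left · · b)) n a

theorem zsmul_right (hs : IsSymForm form) (n : ℤ) (a b : A) : form a (n • b) = n * form a b := by
  rw [hs.symm, hs.zsmul_left, hs.symm]

theorem zero_left (hs : IsSymForm form) (b : A) : form 0 b = 0 := by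
  simpa using hs.zsmul_left 0 0 b

theorem add_zsmul_self (hs : IsSymForm form) (n : ℤ) (δ α : A) :
    form (δ + n • α) (δ + n • α) = form δ δ + 2 * n * form δ α + n * n * form α α := by
  rw [hs.add_left, hs.add_right, hs.add_right, hs.zsmul_left, hs.zsmul_right, hs.zsmul_right,
    hs.zsmul_left, hs.symm α δ]
  ring

theorem add_zsmul_left (hs : IsSymForm form) (n : ℤ) (δ α : A) :
    form (δ + n • α) δ = form δ δ + n * form δ α := by
  rw [hs.add_left, hs.zsmul_left, hs.symm α]

end IsSymForm

namespace IsEARS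

variable {F : Type*} [Field F] [CharZero F] {A : Type*} [AddCommGroup A] {form : A → A → F}
  {R : Set A}

/-- `β = δ + nα` has `(β,β) = n(s+n)(α,α)` and `2(β,δ) = ns(α,α)`; the Cartan integer of `β`
on `δ` is therefore `s / (s + n)`. -/
theorem add_dvd_of_add_zsmul_mem (h : IsEARS form R) {α δ : A} (hαα : form α α ≠ 0)
    (hδ : δ ∈ R) (hδδ : form δ δ = 0) {s n : ℤ} (hs : 2 * form δ α = s * form α α)
    (hsn : s + n ≠ 0) (hmem : δ + n • α ∈ R) : s + n ∣ s := by
  rcases eq_or_ne n 0 with rfl | hn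
  · simp
  have hββ : form (δ + n • α) (δ + n • α) = n * (s + n) * form α α := by
    rw [h.add_zsmul_self, hδδ]
    linear_combination n * hs
  have hβδ : 2 * form (δ + n • α) δ = n * s * form α α := by
    rw [h.add_zsmul_left, hδδ]
    linear_combination n * hs
  have hββ0 : form (δ + n • α) (δ + n • α) ≠ 0 := by
    rw [hββ]
    exact mul_ne_zero (mul_ne_zero (by exact_mod_cast hn) (by exact_mod_cast hsn)) hαα
  obtain ⟨k, hk⟩ := h.cartan _ hmem hββ0 δ hδ
  rw [hβδ, hββ] at hk
  have hF : ((n * s : ℤ) : F) = (n * (k * (s + n)) : ℤ) := by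
    push_cast
    exact mul_right_cancel₀ hαα (by linear_combination hk)
  refine ⟨k, ?_⟩
  rw [mul_comm]
  exact mul_left_cancel₀ hn (by exact_mod_cast hF)

theorem eq_zero_or_eq_zero_of_string (h : IsEARS form R) {α δ : A} (hαα : form α α ≠ 0)
    (hδ : δ ∈ R) (hδδ : form δ δ = 0) {p q : ℕ} (hpq : 2 * form δ α = (p - q) * form α α)
    (hmem : ∀ k : ℤ, δ + k • α ∈ R ↔ -(p : ℤ) ≤ k ∧ k ≤ q) (hne : p ≠ q) : p = 0 ∨ q = 0 := by
  by_contra! hpos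
  have hs : 2 * form δ α = ((p - q : ℤ) : F) * form α α := by push_cast; exact hpq
  have hp : (p : ℤ) ∣ q := by
    have := h.add_dvd_of_add_zsmul_mem hαα hδ hδδ hs (by omega) ((hmem q).2 (by omega))
    rw [sub_add_cancel] at this
    simpa using dvd_sub dvd_rfl this
  have hq : (q : ℤ) ∣ p := by
    have := h.add_dvd_of_add_zsmul_mem hαα hδ hδδ hs (by omega) ((hmem (-p)).2 (by omega))
    rw [show (p : ℤ) - q + -p = -q by ring, neg_dvd] at this
    simpa using dvd_add this dvd_rfl
  exact hne (Nat.dvd_antisymm (by exact_mod_cast hp) (by exact_mod_cast hq))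

end IsEARS

theorem existsUnique_sign_of_forall_iff {P : ℤ → Prop} {p q : ℕ}
    (hP : ∀ k : ℤ, P k ↔ -(p : ℤ) ≤ k ∧ k ≤ q) (hpq : p = 0 ∨ q = 0) (hne : p ≠ q) :
    ∃! r : ℤ, (r = 1 ∨ r = -1) ∧ P r := by
  simp only [hP]
  rcases hpq with rfl | rfl
  · exact ⟨1, by omega, fun r => by omega⟩
  · exact ⟨-1, by omega, fun r => by omega⟩

theorem stmt0 {F : Type*} [Field F] [CharZero F] {A : Type*} [AddCommGroup A]
    (form : A → A → F) (R : Set A) (h : IsEARS form R)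
    (α : A) (hα : α ∈ reRoots form R) (hα0 : α ≠ 0)
    (δ : A) (hδ : δ ∈ nsRoots form R) (hδα : form δ α ≠ 0) :
    ∃! r : ℤ, (r = 1 ∨ r = -1) ∧ δ + r • α ∈ R := by
  obtain ⟨hαR, hαα⟩ : α ∈ R ∧ form α α ≠ 0 := hα.resolve_right hα0
  obtain ⟨hδR, hδδ, -⟩ : δ ∈ R ∧ form δ δ = 0 ∧ δ ∉ formRadical form :=
    hδ.resolve_right fun h0 => hδα (by rw [h0]; exact h.zero_left α)
  obtain ⟨p, q, hpq, hmem⟩ := h.string α hαR hαα δ hδR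
  have hne : p ≠ q := by
    rintro rfl
    exact hδα <| (mul_eq_zero.mp (by simpa using hpq)).resolve_left two_ne_zero
  exact existsUnique_sign_of_forall_iff hmem
    (h.eq_zero_or_eq_zero_of_string hαα hδR hδδ hpq hmem hne) hne
end

section
/- Let (A, (·,·), R) be an extended affine root supersystem over a field F of characteristic zero. If α, β ∈ R_re \ {0} are connected in R_re \ {0} (there is a finite chain α₁ = α, …, α_n = β in R_re \ {0} with (α_i, α_{i+1}) ≠ 0 for all i), then (α,α)/(β,β) lies in the image of ℚ in F. -/
open Pointwise

/-
If `α`, `β` are real roots with `(α, β) ≠ 0`, the Cartan integers give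
`2(α, β) = k (α, α)` and `2(β, α) = m (β, β)` with `k ≠ 0`, so `(α, α) = (m / k) (β, β)`.
Rational proportionality of the squared lengths is transitive, so it propagates along a chain.
-/

lemma ConnectedIn.reflTransGen {F : Type*} [Field F] {A : Type*} [AddCommGroup A]
    {form : A → A → F} {X : Set A} {α β : A} (hc : ConnectedIn form X α β) :
    Relation.ReflTransGen (fun a b => a ∈ X ∧ b ∈ X ∧ form a b ≠ 0) α β := by
  obtain ⟨n, c, hcX, rfl, rfl, hadj⟩ := hc
  exact Fin.induction .refl (fun i ih => ih.tail ⟨hcX _, hcX _, hadj i⟩) (Fin.last n)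

lemma mem_and_form_self_ne_zero_of_mem_reRoots_diff_zero {F : Type*} [Field F] {A : Type*}
    [AddCommGroup A] {form : A → A → F} {R : Set A} {α : A}
    (hα : α ∈ reRoots form R \ {0}) : α ∈ R ∧ form α α ≠ 0 := by
  obtain ⟨hα | hα, hα0⟩ := hα
  · exact hα
  · exact absurd hα hα0

namespace IsEARS

variable {F : Type*} [Field F] [CharZero F] {A : Type*} [AddCommGroup A]
  {form : A → A → F} {R : Set A}

lemma exists_rat_form_self_eq_of_form_ne_zero (h : IsEARS form R) {α β : A}
    (hα : α ∈ R) (hαα : form α α ≠ 0) (hβ : β ∈ R) (hββ : form β β ≠ 0)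
    (hαβ : form α β ≠ 0) : ∃ q : ℚ, form α α = (q : F) * form β β := by
  obtain ⟨k, hk⟩ := h.cartan α hα hαα β hβ
  obtain ⟨m, hm⟩ := h.cartan β hβ hββ α hα
  rw [h.symm β α] at hm
  have hk0 : (k : F) ≠ 0 := by
    rintro hk0
    rw [hk0, zero_mul, mul_eq_zero] at hk
    exact hαβ (hk.resolve_left two_ne_zero)
  refine ⟨m / k, ?_⟩
  push_cast
  field_simp
  linear_combination hk.symm.trans hm

end IsEARS

theorem stmt10_general {F : Type*} [Field F] [CharZero F] {A : Type*} [AddCommGroup A]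
    (form : A → A → F) (R : Set A) (h : IsEARS form R) (α β : A)
    (hc : ConnectedIn form (reRoots form R \ {0}) α β) :
    ∃ q : ℚ, form α α = (q : F) * form β β := by
  have hchain := hc.reflTransGen
  clear hc
  induction hchain with
  | refl => exact ⟨1, by simp⟩
  | tail _ hγδ ih =>
    obtain ⟨hγ, hδ, hγδ⟩ := hγδ
    obtain ⟨hγR, hγγ⟩ := mem_and_form_self_ne_zero_of_mem_reRoots_diff_zero hγ
    obtain ⟨hδR, hδδ⟩ := mem_and_form_self_ne_zero_of_mem_reRoots_diff_zero hδ
    obtain ⟨q, hq⟩ := ih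
    obtain ⟨r, hr⟩ := h.exists_rat_form_self_eq_of_form_ne_zero hγR hγγ hδR hδδ hγδ
    exact ⟨q * r, by rw [hq, hr]; push_cast; ring⟩

theorem stmt10 {F : Type*} [Field F] [CharZero F] {A : Type*} [AddCommGroup A]
    (form : A → A → F) (R : Set A) (h : IsEARS form R) (α β : A)
    (hα : α ∈ reRoots form R) (hα0 : α ≠ 0) (hβ : β ∈ reRoots form R) (hβ0 : β ≠ 0)
    (hc : ConnectedIn form (reRoots form R \ {0}) α β) :
    ∃ q : ℚ, form α α = (q : F) * form β β :=
  stmt10_general form R h α β hc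
end

section
/- Let (A, (·,·), R) be an extended affine root supersystem over a field F of characteristic zero. Every subset B of R_re \ {0} whose elements are mutually disconnected in R_re \ {0} (i.e., no two distinct elements of B are joined by a finite chain α₁, …, α_n in R_re \ {0} with (α_i, α_{i+1}) ≠ 0 for all i) is ℤ-linearly independent in A. -/
open Pointwise

theorem ConnectedIn.of_form_ne_zero {F : Type*} [Field F] {A : Type*} [AddCommGroup A]
    {form : A → A → F} {X : Set A} {a b : A} (ha : a ∈ X) (hb : b ∈ X)
    (hab : form a b ≠ 0) : ConnectedIn form X a b := by
  refine ⟨1, ![a, b], fun i => ?_, rfl, rfl, fun i => ?_⟩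
  · fin_cases i <;> assumption
  · fin_cases i
    exact hab

theorem linearIndependent_int_of_pairwise_form_eq_zero {F : Type*} [Field F] [CharZero F]
    {A : Type*} [AddCommGroup A] {form : A → A → F}
    (hadd : ∀ a b c, form (a + b) c = form a c + form b c) {ι : Type*} {v : ι → A}
    (hself : ∀ i, form (v i) (v i) ≠ 0) (horth : Pairwise fun i j => form (v i) (v j) = 0) :
    LinearIndependent ℤ v := by
  rw [linearIndependent_iff']
  intro s g hsum j hj
  let pairWith : A →+ F := AddMonoidHom.mk' (form · (v j)) (fun x y => hadd x y (v j))
  have hpair : ∑ i ∈ s, g i • form (v i) (v j) = 0 := by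
    have := congrArg pairWith hsum
    simp only [map_sum, map_zsmul, map_zero] at this
    exact this
  rw [Finset.sum_eq_single_of_mem j hj fun i _ hij => by rw [horth hij, smul_zero]] at hpair
  exact (smul_eq_zero.mp hpair).resolve_right (hself j)

theorem stmt11 {F : Type*} [Field F] [CharZero F] {A : Type*} [AddCommGroup A]
    (form : A → A → F) (R : Set A) (h : IsEARS form R)
    (B : Set A) (hB : B ⊆ reRoots form R \ {0})
    (hdis : ∀ a ∈ B, ∀ b ∈ B, a ≠ b → ¬ ConnectedIn form (reRoots form R \ {0}) a b) :
    LinearIndependent ℤ (fun b : B => (b : A)) := by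
  have hself (a : B) : form a a ≠ 0 := by
    obtain ⟨hre | hzero, hnz⟩ := hB a.2
    exacts [hre.2, (hnz hzero).elim]
  have horth : Pairwise fun a b : B => form a b = 0 := fun a b hab => by
    by_contra hne
    exact hdis a a.2 b b.2 (Subtype.coe_injective.ne hab)
      (.of_form_ne_zero (hB a.2) (hB b.2) hne)
  exact linearIndependent_int_of_pairwise_form_eq_zero h.add_left hself horth
end
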